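/- (Leading logarithmic term of I_0 at the figure-eight.) As h → 0⁺ one has (I_0(h) − 4/3) / (h·ln h) → −1. -/

import Mathlib

open Real Set Filter intervalIntegral

/-- Right endpoint of the exterior oval: `x_max(h) = √(1 + √(1+4h))`. -/
noncomputable def xmax (h : ℝ) : ℝ := Real.sqrt (1 + Real.sqrt (1 + 4*h))

/-- Complete elliptic integral `I_i(h) = ∫_{-x_max}^{x_max} x^i √(2h + x² - x⁴/2) dx`. -/
noncomputable def ellI (i : ℕ) (h : ℝ) : ℝ :=
  ∫ x in (-xmax h)..(xmax h), x^i * Real.sqrt (2*h + x^2 - x^4/2)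

/-- Complete elliptic integral `I'_i(h) = ∫_{-x_max}^{x_max} x^i (2h + x² - x⁴/2)^{-1/2} dx`. -/
noncomputable def ellI' (i : ℕ) (h : ℝ) : ℝ :=
  ∫ x in (-xmax h)..(xmax h), x^i / Real.sqrt (2*h + x^2 - x^4/2)

/-!
With `b = x_max(h)` and `±ic` the other two roots, `2h + x² - x⁴/2 = (b² - x²)(x² + c²)/2`,
where `b² = 2 + c²` and `b²c² = 4h`; by evenness `I_0 = √2 ∫₀ᵇ √(b² - x²) √(x² + c²) dx`.
Split `√(x² + c²) = x + (√(x² + c²) - x)`: the first part gives `√2 b³/3 = 4/3 + O(h)`. The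
second is concentrated near `x = 0`, where `√(b² - x²) ≈ b`, so up to `O(c²)` it is
`√2 b ∫₀ᵇ (√(x² + c²) - x) dx = √2 b (c²/2) log (1/c) + O(c²)`, and `√2 b ≈ 2`, `c² ≈ 2h`
turn this into `-h log h + O(h)`.
-/

lemma integral_neg_self_eq_two_mul_of_even {f : ℝ → ℝ} (hf : Continuous f)
    (heven : ∀ x, f (-x) = f x) (b : ℝ) :
    ∫ x in -b..b, f x = 2 * ∫ x in 0..b, f x := by
  have hneg : ∫ x in -b..0, f x = ∫ x in 0..b, f x := by
    simpa only [heven, neg_zero] using (integral_comp_neg (a := 0) (b := b) f).symm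
  rw [← integral_add_adjacent_intervals (b := 0) (hf.intervalIntegrable _ _)
    (hf.intervalIntegrable _ _), hneg, two_mul]

section Integrals

variable {b c : ℝ}

lemma integral_mul_sqrt_sq_sub_sq (hb : 0 ≤ b) :
    ∫ x in (0:ℝ)..b, x * √(b ^ 2 - x ^ 2) = b ^ 3 / 3 := by
  have hderiv : ∀ x ∈ Ioo 0 b, HasDerivAt (fun x => -(1 / 3) * ((b ^ 2 - x ^ 2) * √(b ^ 2 - x ^ 2)))
      (x * √(b ^ 2 - x ^ 2)) x := by
    intro x hx
    have hpos : 0 < b ^ 2 - x ^ 2 := by nlinarith [hx.1, hx.2]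
    have hu : HasDerivAt (fun x => b ^ 2 - x ^ 2) (-(2 * x)) x := by
      simpa using (hasDerivAt_pow 2 x).const_sub (b ^ 2)
    refine ((hu.fun_mul (hu.sqrt hpos.ne')).const_mul (-(1 / 3))).congr_deriv ?_
    have hs : √(b ^ 2 - x ^ 2) ≠ 0 := (sqrt_pos.2 hpos).ne'
    field_simp
    rw [sq_sqrt hpos.le]
    ring
  rw [integral_eq_sub_of_hasDeriv_right_of_le hb (by fun_prop)
    (fun x hx => (hderiv x hx).hasDerivWithinAt) (Continuous.intervalIntegrable (by fun_prop) _ _)]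
  simp [sqrt_sq hb]
  ring

lemma neg_lt_sqrt_sq_add_sq (hc : 0 < c) (x : ℝ) : -x < √(x ^ 2 + c ^ 2) := by
  refine (neg_le_abs x).trans_lt ?_
  rw [← sqrt_sq_eq_abs]
  exact sqrt_lt_sqrt (sq_nonneg x) (by simpa using pow_pos hc 2)

lemma integral_sqrt_sq_add_sq_sub_self (hc : 0 < c) :
    ∫ x in (0:ℝ)..b, (√(x ^ 2 + c ^ 2) - x)
      = (b * √(b ^ 2 + c ^ 2) - b ^ 2 + c ^ 2 * (log (b + √(b ^ 2 + c ^ 2)) - log c)) / 2 := by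
  have hderiv : ∀ x ∈ uIcc 0 b, HasDerivAt
      (fun x => (x * √(x ^ 2 + c ^ 2) + c ^ 2 * log (x + √(x ^ 2 + c ^ 2)) - x ^ 2) / 2)
      (√(x ^ 2 + c ^ 2) - x) x := by
    intro x _
    have hpos : 0 < x ^ 2 + c ^ 2 := by positivity
    have hlog : 0 < x + √(x ^ 2 + c ^ 2) := by linarith [neg_lt_sqrt_sq_add_sq hc x]
    have hsq : HasDerivAt (fun x => x ^ 2) (2 * x) x := by simpa using hasDerivAt_pow 2 x
    have hs := (hsq.add_const (c ^ 2)).sqrt hpos.ne'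
    refine ((((hasDerivAt_id' x).fun_mul hs).fun_add
      ((((hasDerivAt_id' x).fun_add hs).log hlog.ne').const_mul (c ^ 2))).fun_sub
      hsq).div_const 2 |>.congr_deriv ?_
    have hs0 : √(x ^ 2 + c ^ 2) ≠ 0 := (sqrt_pos.2 hpos).ne'
    field_simp
    linear_combination -(x + √(x ^ 2 + c ^ 2)) * sq_sqrt hpos.le
  rw [integral_eq_sub_of_hasDerivAt hderiv (Continuous.intervalIntegrable (by fun_prop) _ _)]
  simp [sqrt_sq hc.le]
  ring

lemma sqrt_sq_add_sq_sub_self_nonneg (c x : ℝ) : 0 ≤ √(x ^ 2 + c ^ 2) - x :=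
  sub_nonneg.2 (le_sqrt_of_sq_le (by nlinarith))

lemma sqrt_sq_add_sq_sub_self_mul_le (c x : ℝ) :
    (√(x ^ 2 + c ^ 2) - x) * (2 * x) ≤ c ^ 2 := by
  have hu := sq_sqrt (by positivity : 0 ≤ x ^ 2 + c ^ 2)
  nlinarith [sqrt_sq_add_sq_sub_self_nonneg c x]

lemma abs_integral_sqrt_mul_sqrt_sub_le (hb : 0 < b) :
    |(∫ x in (0:ℝ)..b, √(b ^ 2 - x ^ 2) * √(x ^ 2 + c ^ 2))
      - (b ^ 3 / 3 + b * ∫ x in (0:ℝ)..b, (√(x ^ 2 + c ^ 2) - x))| ≤ b * c ^ 2 / 4 := by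
  have hint : ∀ f : ℝ → ℝ, Continuous f → IntervalIntegrable f MeasureTheory.volume 0 b :=
    fun f hf => hf.intervalIntegrable _ _
  set D := ∫ x in (0:ℝ)..b, (√(x ^ 2 + c ^ 2) - x) * (b - √(b ^ 2 - x ^ 2))
  have hsplit : ∫ x in (0:ℝ)..b, √(b ^ 2 - x ^ 2) * √(x ^ 2 + c ^ 2)
      = b ^ 3 / 3 + b * (∫ x in (0:ℝ)..b, (√(x ^ 2 + c ^ 2) - x)) - D := by
    rw [← integral_mul_sqrt_sq_sub_sq hb.le, ← integral_const_mul,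
      ← integral_add (hint _ (by fun_prop)) (hint _ (by fun_prop)),
      ← integral_sub (hint _ (by fun_prop)) (hint _ (by fun_prop))]
    congr 1 with x
    ring
  have hpoint : ∀ x ∈ Icc 0 b,
      (√(x ^ 2 + c ^ 2) - x) * (b - √(b ^ 2 - x ^ 2)) ≤ c ^ 2 / (2 * b) * x := by
    rintro x ⟨hx0, hxb⟩
    have hv := sq_sqrt (by nlinarith : 0 ≤ b ^ 2 - x ^ 2)
    have hvb : √(b ^ 2 - x ^ 2) ≤ b := sqrt_le_left hb.le |>.2 (by nlinarith)
    have hgap := sqrt_sq_add_sq_sub_self_nonneg c x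
    have hbv : b * (b - √(b ^ 2 - x ^ 2)) ≤ x ^ 2 := by nlinarith [sqrt_nonneg (b ^ 2 - x ^ 2)]
    rw [div_mul_eq_mul_div, le_div_iff₀ (by positivity)]
    nlinarith [sqrt_sq_add_sq_sub_self_mul_le c x, mul_le_mul_of_nonneg_left hbv hgap]
  have hD_nonneg : 0 ≤ D := integral_nonneg hb.le fun x hx =>
    mul_nonneg (sqrt_sq_add_sq_sub_self_nonneg c x)
      (sub_nonneg.2 (sqrt_le_left hb.le |>.2 (by nlinarith [hx.1])))
  have hD_le : D ≤ b * c ^ 2 / 4 := by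
    calc D ≤ ∫ x in (0:ℝ)..b, c ^ 2 / (2 * b) * x :=
          integral_mono_on hb.le (hint _ (by fun_prop)) (hint _ (by fun_prop)) hpoint
      _ = b * c ^ 2 / 4 := by
          rw [integral_const_mul, integral_id]
          field_simp
          ring
  rw [hsplit, abs_le]
  constructor <;> linarith

end Integrals

/-- `±i imRoot h` are the non-real roots of `2h + x² - x⁴/2`, whose real roots are `±xmax h`. -/
noncomputable def imRoot (h : ℝ) : ℝ := √(√(1 + 4 * h) - 1)

section Oval

variable {h : ℝ}

lemma xmax_sq (h : ℝ) : xmax h ^ 2 = 1 + √(1 + 4 * h) := sq_sqrt (by positivity)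

lemma imRoot_sq (hh : 0 ≤ h) : imRoot h ^ 2 = √(1 + 4 * h) - 1 :=
  sq_sqrt (sub_nonneg.2 (one_le_sqrt.2 (by linarith)))

lemma xmax_pos (h : ℝ) : 0 < xmax h := sqrt_pos.2 (by positivity)

lemma imRoot_pos (hh : 0 < h) : 0 < imRoot h :=
  sqrt_pos.2 (sub_pos.2 ((lt_sqrt zero_le_one).2 (by linarith)))

lemma xmax_sq_eq_two_add_imRoot_sq (hh : 0 ≤ h) : xmax h ^ 2 = 2 + imRoot h ^ 2 := by
  rw [xmax_sq, imRoot_sq hh]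
  ring

lemma xmax_sq_mul_imRoot_sq (hh : 0 ≤ h) : xmax h ^ 2 * imRoot h ^ 2 = 4 * h := by
  rw [xmax_sq, imRoot_sq hh]
  linear_combination sq_sqrt (by linarith : 0 ≤ 1 + 4 * h)

lemma energy_poly_factor (hh : 0 ≤ h) (x : ℝ) :
    2 * h + x ^ 2 - x ^ 4 / 2 = (xmax h ^ 2 - x ^ 2) * (x ^ 2 + imRoot h ^ 2) / 2 := by
  rw [xmax_sq, imRoot_sq hh]
  linear_combination (-1 / 2) * sq_sqrt (by linarith : 0 ≤ 1 + 4 * h)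

lemma ellI_zero_eq (hh : 0 ≤ h) :
    ellI 0 h = √2 * ∫ x in (0:ℝ)..xmax h, √(xmax h ^ 2 - x ^ 2) * √(x ^ 2 + imRoot h ^ 2) := by
  have hsym := integral_neg_self_eq_two_mul_of_even
    (f := fun x => √(2 * h + x ^ 2 - x ^ 4 / 2)) (by fun_prop) (fun x => by ring_nf) (xmax h)
  simp only [ellI, pow_zero, one_mul, hsym]
  rw [integral_congr (g := fun x => (√2)⁻¹ * (√(xmax h ^ 2 - x ^ 2) * √(x ^ 2 + imRoot h ^ 2))),
    integral_const_mul, ← mul_assoc]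
  · rw [← div_eq_mul_inv, div_sqrt]
  · intro x hx
    rw [uIcc_of_le (xmax_pos h).le] at hx
    have hx2 : 0 ≤ xmax h ^ 2 - x ^ 2 := by nlinarith [hx.1, hx.2]
    simp only
    rw [energy_poly_factor hh, sqrt_div (mul_nonneg hx2 (by positivity)), sqrt_mul hx2]
    ring

end Oval

section Estimates

variable {b c h : ℝ}

lemma sqrt_two_le_of_sq_eq (hb : 0 < b) (hb2 : b ^ 2 = 2 + c ^ 2) : √2 ≤ b :=
  (sqrt_le_left hb.le).2 (by nlinarith)

lemma sqrt_two_mul_le (hb : 0 < b) (hb2 : b ^ 2 = 2 + c ^ 2) : √2 * b ≤ 2 + c ^ 2 / 2 := by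
  have hr2 : √2 ^ 2 = 2 := sq_sqrt zero_le_two
  have hgap := sqrt_two_le_of_sq_eq hb hb2
  -- `(b - √2)(b + √2) = c²` with `b + √2 ≥ 2√2`
  nlinarith [mul_le_mul_of_nonneg_left (by linarith : 2 * √2 ≤ b + √2) (sub_nonneg.2 hgap)]

lemma sqrt_two_mul_mul_sq_le (hb : 0 < b) (hb2 : b ^ 2 = 2 + c ^ 2)
    (hbc : b ^ 2 * c ^ 2 = 4 * h) : √2 * b * c ^ 2 ≤ 4 * h := by
  rw [← hbc]
  have := mul_le_mul_of_nonneg_right (sqrt_two_le_of_sq_eq hb hb2) hb.le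
  nlinarith [sq_nonneg c]

lemma sqrt_two_mul_pow_three_bounds (hb : 0 < b) (hb2 : b ^ 2 = 2 + c ^ 2) :
    0 ≤ √2 * b ^ 3 / 3 - 4 / 3 ∧ √2 * b ^ 3 / 3 - 4 / 3 ≤ c ^ 2 + c ^ 4 / 6 := by
  have hlo : 2 ≤ √2 * b := by
    simpa [mul_self_sqrt zero_le_two] using
      mul_le_mul_of_nonneg_left (sqrt_two_le_of_sq_eq hb hb2) (sqrt_nonneg 2)
  have hcube : √2 * b ^ 3 = √2 * b * (2 + c ^ 2) := by rw [← hb2]; ring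
  constructor
  · nlinarith [mul_le_mul_of_nonneg_right hlo (sq_nonneg c)]
  · nlinarith [mul_le_mul_of_nonneg_right (sqrt_two_mul_le hb hb2)
      (by positivity : (0:ℝ) ≤ 2 + c ^ 2)]

lemma mul_sqrt_sq_add_sq_sub_sq_bounds (hb : 0 < b) :
    0 ≤ b * √(b ^ 2 + c ^ 2) - b ^ 2 ∧ b * √(b ^ 2 + c ^ 2) - b ^ 2 ≤ c ^ 2 / 2 := by
  have hG2 : √(b ^ 2 + c ^ 2) ^ 2 = b ^ 2 + c ^ 2 := sq_sqrt (by positivity)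
  have hbG : b ≤ √(b ^ 2 + c ^ 2) := le_sqrt_of_sq_le (by nlinarith)
  constructor <;> nlinarith [sq_nonneg (√(b ^ 2 + c ^ 2) - b)]

lemma log_mul_add_sqrt_div_two_bounds (hb : 0 < b) (hb2 : b ^ 2 = 2 + c ^ 2) :
    0 ≤ log (b * (b + √(b ^ 2 + c ^ 2)) / 2)
      ∧ log (b * (b + √(b ^ 2 + c ^ 2)) / 2) ≤ 1 + 5 * c ^ 2 / 4 := by
  obtain ⟨hlo, hhi⟩ := mul_sqrt_sq_add_sq_sub_sq_bounds (c := c) hb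
  have hone : 1 ≤ b * (b + √(b ^ 2 + c ^ 2)) / 2 := by nlinarith [sq_nonneg c]
  exact ⟨log_nonneg hone, (log_le_sub_one_of_pos (by linarith)).trans (by nlinarith)⟩

lemma abs_mul_sub_sqrt_two_mul_log_le (hb : 0 < b) (hb2 : b ^ 2 = 2 + c ^ 2)
    (hbc : b ^ 2 * c ^ 2 = 4 * h) (hh : 0 < h) (h1 : h ≤ 1) :
    |b * c ^ 2 / 4 * (b - √2) * log h| ≤ h / 2 := by
  have hgap : 0 ≤ b - √2 := sub_nonneg.2 (sqrt_two_le_of_sq_eq hb hb2)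
  have hcoef : 0 ≤ b * c ^ 2 / 4 * (b - √2) := by positivity
  have hcoef' : b * c ^ 2 / 4 * (b - √2) ≤ h ^ 2 / 2 := by
    have hr2 : √2 * √2 = 2 := mul_self_sqrt zero_le_two
    have hgap' : √2 * (b - √2) ≤ h := by nlinarith [sqrt_two_mul_le hb hb2]
    have hprod := mul_le_mul (sqrt_two_mul_mul_sq_le hb hb2 hbc) hgap'
      (by positivity) (by positivity)
    nlinarith
  rw [abs_mul, abs_of_nonneg hcoef]
  calc b * c ^ 2 / 4 * (b - √2) * |log h| ≤ h ^ 2 / 2 * |log h| := by gcongr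
    _ = h / 2 * |log h * h| := by rw [abs_mul, abs_of_pos hh]; ring
    _ ≤ h / 2 := mul_le_of_le_one_right (by positivity) (abs_log_mul_self_lt h hh h1).le

lemma abs_closed_form_sub_le (hb : 0 < b) (hc : 0 < c) (hb2 : b ^ 2 = 2 + c ^ 2)
    (hbc : b ^ 2 * c ^ 2 = 4 * h) (h14 : h ≤ 1 / 4) :
    |√2 * (b ^ 3 / 3 + b * ((b * √(b ^ 2 + c ^ 2) - b ^ 2
        + c ^ 2 * (log (b + √(b ^ 2 + c ^ 2)) - log c)) / 2)) - 4 / 3 + h * log h| ≤ 9 * h := by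
  set G := √(b ^ 2 + c ^ 2)
  have hh : 0 < h := by nlinarith [mul_pos (pow_pos hb 2) (pow_pos hc 2)]
  have hc2 : c ^ 2 ≤ 2 * h := by nlinarith
  have hlog_h : log h = 2 * (log b + log c - log 2) := by
    rw [show h = (b * c / 2) ^ 2 by linear_combination -hbc / 4, log_pow,
      log_div (by positivity) two_ne_zero, log_mul hb.ne' hc.ne']
    push_cast
    ring
  have hL : log (b * (b + G) / 2) = log b + log (b + G) - log 2 := by
    rw [log_div (by positivity) two_ne_zero, log_mul hb.ne' (by positivity : 0 < b + G).ne']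
  -- `h = (bc/2)²` trades `-log c` for `-(log h)/2` up to bounded logarithms
  have hsplit : √2 * (b ^ 3 / 3 + b * ((b * G - b ^ 2 + c ^ 2 * (log (b + G) - log c)) / 2))
      - 4 / 3 + h * log h = (√2 * b ^ 3 / 3 - 4 / 3) + √2 * b / 2 * (b * G - b ^ 2)
        + √2 * b * c ^ 2 / 2 * log (b * (b + G) / 2) + b * c ^ 2 / 4 * (b - √2) * log h := by
    rw [hL]
    linear_combination √2 * b * c ^ 2 / 4 * hlog_h - log h / 4 * hbc
  obtain ⟨hcube, hcube'⟩ := sqrt_two_mul_pow_three_bounds hb hb2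
  obtain ⟨hroot, hroot'⟩ := mul_sqrt_sq_add_sq_sub_sq_bounds (c := c) hb
  obtain ⟨hlogq, hlogq'⟩ := log_mul_add_sqrt_div_two_bounds hb hb2
  have hrem := abs_le.1 (abs_mul_sub_sqrt_two_mul_log_le hb hb2 hbc hh (by linarith))
  have hsmall := sqrt_two_mul_mul_sq_le hb hb2 hbc
  have hc4 : c ^ 4 ≤ c ^ 2 / 2 := by nlinarith
  have hcoef : 0 ≤ √2 * b := by positivity
  rw [hsplit, abs_le]
  constructor
  · nlinarith [mul_nonneg hcoef hroot, mul_nonneg (mul_nonneg hcoef (sq_nonneg c)) hlogq]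
  · nlinarith [mul_le_mul_of_nonneg_left hroot' hcoef,
      mul_le_mul_of_nonneg_left hlogq' (mul_nonneg hcoef (sq_nonneg c))]

end Estimates

lemma abs_ellI_zero_sub_le {h : ℝ} (hh : 0 < h) (h14 : h ≤ 1 / 4) :
    |ellI 0 h - 4 / 3 + h * log h| ≤ 10 * h := by
  have hb2 := xmax_sq_eq_two_add_imRoot_sq hh.le
  have hbc := xmax_sq_mul_imRoot_sq hh.le
  have hJ := abs_integral_sqrt_mul_sqrt_sub_le (c := imRoot h) (xmax_pos h)
  rw [integral_sqrt_sq_add_sq_sub_self (imRoot_pos hh)] at hJ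
  have hM := abs_closed_form_sub_le (xmax_pos h) (imRoot_pos hh) hb2 hbc h14
  have hsmall := sqrt_two_mul_mul_sq_le (xmax_pos h) hb2 hbc
  rw [ellI_zero_eq hh.le]
  set J := ∫ x in (0:ℝ)..xmax h, √(xmax h ^ 2 - x ^ 2) * √(x ^ 2 + imRoot h ^ 2)
  set M := xmax h ^ 3 / 3 + xmax h * ((xmax h * √(xmax h ^ 2 + imRoot h ^ 2) - xmax h ^ 2
    + imRoot h ^ 2 * (log (xmax h + √(xmax h ^ 2 + imRoot h ^ 2)) - log (imRoot h))) / 2)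
  calc |√2 * J - 4 / 3 + h * log h| = |√2 * (J - M) + (√2 * M - 4 / 3 + h * log h)| := by ring_nf
    _ ≤ |√2 * (J - M)| + |√2 * M - 4 / 3 + h * log h| := abs_add_le _ _
    _ = √2 * |J - M| + |√2 * M - 4 / 3 + h * log h| := by
        rw [abs_mul, abs_of_pos (sqrt_pos.2 zero_lt_two)]
    _ ≤ √2 * (xmax h * imRoot h ^ 2 / 4) + 9 * h := by gcongr
    _ ≤ 10 * h := by linarith

/-- Leading logarithmic term of `I₀` at the figure-eight. -/
theorem ellI0_log_asymptotics :
    Tendsto (fun h => (ellI 0 h - 4/3) / (h * Real.log h))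
      (nhdsWithin 0 (Ioi 0)) (nhds (-1)) := by
  have hbound : ∀ᶠ h in nhdsWithin 0 (Ioi 0),
      ‖(ellI 0 h - 4/3) / (h * Real.log h) - (-1)‖ ≤ 10 * (-Real.log h)⁻¹ := by
    filter_upwards [Ioo_mem_nhdsGT (show (0:ℝ) < 1/4 by norm_num)] with h ⟨hh, h14⟩
    have hlog : Real.log h < 0 := Real.log_neg hh (by linarith)
    have hlog0 : Real.log h ≠ 0 := hlog.ne
    rw [show (ellI 0 h - 4/3) / (h * Real.log h) - (-1)
        = (ellI 0 h - 4/3 + h * Real.log h) / (h * Real.log h) by field_simp; ring,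
      norm_div, Real.norm_eq_abs, Real.norm_eq_abs, abs_mul, abs_of_pos hh, abs_of_neg hlog,
      div_le_iff₀ (mul_pos hh (neg_pos.2 hlog))]
    calc |ellI 0 h - 4/3 + h * Real.log h| ≤ 10 * h := abs_ellI_zero_sub_le hh h14.le
      _ = 10 * (-Real.log h)⁻¹ * (h * -Real.log h) := by field_simp
  have hlim : Tendsto (fun h => 10 * (-Real.log h)⁻¹) (nhdsWithin 0 (Ioi 0)) (nhds 0) := by
    simpa using (tendsto_inv_atTop_zero.comp
      (tendsto_neg_atBot_atTop.comp Real.tendsto_log_nhdsGT_zero)).const_mul 10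
  exact tendsto_sub_nhds_zero_iff.1 (squeeze_zero_norm' hbound hlim)
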